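/- arXiv:1801.09400 — 2 statements merged into one kernel-verified Lean document; each statement's English description precedes it below -/
import Mathlib

section
/- Let 1 ≤ a ≤ b ≤ c and let x ≠ y be vertices in the second generation V_2 of the antitree AT((a,b,c)). Then for p ∈ [0, 1/(a+b+c)], κ_p(x,y) = (a+b+c−2)/(a+b+c−1) + ((a+b+c)/(a+b+c−1))·p, and for p ∈ [1/(a+b+c), 1], κ_p(x,y) = ((a+b+c)/(a+b+c−1))·(1−p). -/
noncomputable section
open Classical Filter Topology

/-- Vertex set of the antitree with `N` generations of sizes `a 0, a 1, ...`. -/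
abbrev ATV (N : ℕ) (a : ℕ → ℕ) := Σ i : Fin N, Fin (a i.val)

/-- The antitree `AT((a_k))`: distinct vertices are adjacent iff they lie in the same
or in consecutive generations. -/
def antitree (N : ℕ) (a : ℕ → ℕ) : SimpleGraph (ATV N a) where
  Adj x y := x ≠ y ∧ (x.1.val = y.1.val ∨ x.1.val + 1 = y.1.val ∨ y.1.val + 1 = x.1.val)
  symm := by constructor; intro x y h; exact ⟨h.1.symm, by tauto⟩
  loopless := by constructor; intro x h; exact h.1 rfl

/-- Degree of a vertex: the number of its neighbours. -/
def deg {V : Type} (G : SimpleGraph V) (x : V) : ℕ := Nat.card {z // G.Adj x z}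

/-- The `p`-lazy random-walk measure `μ_x^p`. -/
def lazyMeasure {V : Type} (G : SimpleGraph V) (p : ℝ) (x : V) : V → ℝ :=
  fun z => if z = x then p else if G.Adj x z then (1 - p) / (deg G x : ℝ) else 0

/-- Wasserstein distance (w.r.t. the graph metric) between two measures on a finite
vertex set, as an infimum of transport costs over all transport plans. -/
def W1 {V : Type} [Fintype V] (G : SimpleGraph V) (μ ν : V → ℝ) : ℝ :=
  sInf { c | ∃ π : V → V → ℝ, (∀ a b, 0 ≤ π a b) ∧ (∀ a, ∑ b, π a b = μ a) ∧
    (∀ b, ∑ a, π a b = ν b) ∧ c = ∑ a, ∑ b, (G.dist a b : ℝ) * π a b }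

/-- The `p`-Ollivier-Ricci curvature of an edge. -/
def kappa {V : Type} [Fintype V] (G : SimpleGraph V) (p : ℝ) (x y : V) : ℝ :=
  1 - W1 G (lazyMeasure G p x) (lazyMeasure G p y)

/-! Both endpoints of an inner edge are adjacent to every vertex, so with `n = a + b + c` the
measures `μ_x^p` and `μ_y^p` agree off `{x, y}`, and at `x` and `y` they take the values `p` and
`(1 - p)/(n - 1)` in swapped order. Carrying the surplus `|p - (1 - p)/(n - 1)|` across the edge
`xy` costs exactly that much, and no coupling is cheaper since the surplus has to leave its
vertex. Hence `W₁ = |p n - 1|/(n - 1)`, and the two regimes are the two signs of `p n - 1`. -/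

open SimpleGraph

section Transport

variable {V : Type} [Fintype V] (G : SimpleGraph V)

def IsCoupling (μ ν : V → ℝ) (π : V → V → ℝ) : Prop :=
  (∀ a b, 0 ≤ π a b) ∧ (∀ a, ∑ b, π a b = μ a) ∧ (∀ b, ∑ a, π a b = ν b)

def transportCost (π : V → V → ℝ) : ℝ := ∑ a, ∑ b, (G.dist a b : ℝ) * π a b

variable {G}

lemma W1_eq_sInf (μ ν : V → ℝ) :
    W1 G μ ν = sInf {c | ∃ π, IsCoupling μ ν π ∧ c = transportCost G π} := by
  simp only [W1, IsCoupling, transportCost, and_assoc]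

lemma transportCost_nonneg {π : V → V → ℝ} (hπ : ∀ a b, 0 ≤ π a b) : 0 ≤ transportCost G π :=
  Finset.sum_nonneg fun a _ => Finset.sum_nonneg fun b _ => mul_nonneg (Nat.cast_nonneg _) (hπ a b)

lemma W1_le_transportCost {μ ν : V → ℝ} {π : V → V → ℝ} (hπ : IsCoupling μ ν π) :
    W1 G μ ν ≤ transportCost G π := by
  rw [W1_eq_sInf]
  refine csInf_le ⟨0, ?_⟩ ⟨π, hπ, rfl⟩
  rintro _ ⟨π', hπ', rfl⟩
  exact transportCost_nonneg hπ'.1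

lemma le_W1 {μ ν : V → ℝ} {δ : ℝ} (hne : ∃ π, IsCoupling μ ν π)
    (h : ∀ π, IsCoupling μ ν π → δ ≤ transportCost G π) : δ ≤ W1 G μ ν := by
  rw [W1_eq_sInf]
  obtain ⟨π, hπ⟩ := hne
  refine le_csInf ⟨_, π, hπ, rfl⟩ ?_
  rintro _ ⟨π', hπ', rfl⟩
  exact h π' hπ'

/-- The excess mass `μ x - ν x` has to leave `x`, and every unit leaving `x` travels at least
distance one. -/
lemma sub_le_transportCost (hG : G.Connected) {μ ν : V → ℝ} {π : V → V → ℝ}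
    (hπ : IsCoupling μ ν π) (x : V) : μ x - ν x ≤ transportCost G π := by
  obtain ⟨hpos, hrow, hcol⟩ := hπ
  have hstay : π x x ≤ ν x :=
    hcol x ▸ Finset.single_le_sum (fun a _ => hpos a x) (Finset.mem_univ x)
  have hleave : μ x - π x x = ∑ b ∈ Finset.univ.erase x, π x b := by
    rw [← hrow x, ← Finset.add_sum_erase _ _ (Finset.mem_univ x), add_sub_cancel_left]
  have hcost : ∑ b ∈ Finset.univ.erase x, π x b ≤ ∑ b, (G.dist x b : ℝ) * π x b := by
    calc ∑ b ∈ Finset.univ.erase x, π x b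
        ≤ ∑ b ∈ Finset.univ.erase x, (G.dist x b : ℝ) * π x b := by
          refine Finset.sum_le_sum fun b hb => le_mul_of_one_le_left (hpos x b) ?_
          exact_mod_cast hG.pos_dist_of_ne (Finset.ne_of_mem_erase hb).symm
      _ ≤ ∑ b, (G.dist x b : ℝ) * π x b :=
          Finset.sum_le_sum_of_subset_of_nonneg (Finset.erase_subset _ _)
            fun b _ _ => mul_nonneg (Nat.cast_nonneg _) (hpos x b)
  have hrowcost : ∑ b, (G.dist x b : ℝ) * π x b ≤ transportCost G π :=
    Finset.single_le_sum (f := fun a => ∑ b, (G.dist a b : ℝ) * π a b)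
      (fun a _ => Finset.sum_nonneg fun b _ => mul_nonneg (Nat.cast_nonneg _) (hpos a b))
      (Finset.mem_univ x)
  linarith

/-- Keep `μ` in place except for `δ` units carried from `x` to `y`. -/
def shiftCoupling (μ : V → ℝ) (x y : V) (δ : ℝ) : V → V → ℝ := fun v w =>
  (if v = w then Function.update μ x (μ x - δ) v else 0) + if v = x ∧ w = y then δ else 0

lemma isCoupling_shiftCoupling {μ ν : V → ℝ} {x y : V} {δ : ℝ} (hxy : x ≠ y)
    (hμ : ∀ z, 0 ≤ μ z) (hν : ∀ z, 0 ≤ ν z) (hδ : 0 ≤ δ)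
    (hx : μ x = ν x + δ) (hy : ν y = μ y + δ) (hrest : ∀ z, z ≠ x → z ≠ y → μ z = ν z) :
    IsCoupling μ ν (shiftCoupling μ x y δ) := by
  refine ⟨fun v w => ?_, fun v => ?_, fun w => ?_⟩
  · unfold shiftCoupling
    have : 0 ≤ Function.update μ x (μ x - δ) v := by
      rcases eq_or_ne v x with rfl | hv
      · simpa [hx] using hν v
      · simpa [hv] using hμ v
    positivity
  · simp only [shiftCoupling, Finset.sum_add_distrib, Finset.sum_ite_eq, Finset.mem_univ,
      if_true]
    rcases eq_or_ne v x with rfl | hv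
    · simp
    · simp [hv]
  · simp only [shiftCoupling, Finset.sum_add_distrib, Finset.sum_ite_eq', ite_and,
      Finset.mem_univ, if_true]
    rcases eq_or_ne w x with rfl | hwx
    · simp [hxy, hx]
    rcases eq_or_ne w y with rfl | hwy
    · simp [hwx, hy]
    · simp [hwx, hwy, hrest w hwx hwy]

lemma transportCost_shiftCoupling (μ : V → ℝ) (x y : V) (δ : ℝ) :
    transportCost G (shiftCoupling μ x y δ) = δ * G.dist x y := by
  simp only [transportCost, shiftCoupling, mul_add, Finset.sum_add_distrib, mul_ite, mul_zero,
    ite_and, Finset.sum_ite_eq, Finset.mem_univ, if_true, dist_self]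
  simp [mul_comm]

theorem W1_eq_of_eq_add_of_adj (hG : G.Connected) {μ ν : V → ℝ} {x y : V} {δ : ℝ}
    (hxy : G.Adj x y) (hμ : ∀ z, 0 ≤ μ z) (hν : ∀ z, 0 ≤ ν z) (hδ : 0 ≤ δ)
    (hx : μ x = ν x + δ) (hy : ν y = μ y + δ) (hrest : ∀ z, z ≠ x → z ≠ y → μ z = ν z) :
    W1 G μ ν = δ := by
  have hπ := isCoupling_shiftCoupling hxy.ne hμ hν hδ hx hy hrest
  refine le_antisymm ?_ (le_W1 ⟨_, hπ⟩ fun π hπ' => ?_)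
  · simpa [transportCost_shiftCoupling, dist_eq_one_iff_adj.2 hxy]
      using W1_le_transportCost (G := G) hπ
  · linarith [sub_le_transportCost hG hπ' x]

end Transport

lemma lazyMeasure_nonneg {V : Type} (G : SimpleGraph V) {p : ℝ} (hp0 : 0 ≤ p) (hp1 : p ≤ 1)
    (x z : V) :
    0 ≤ lazyMeasure G p x z := by
  unfold lazyMeasure
  have : 0 ≤ 1 - p := sub_nonneg.2 hp1
  split_ifs <;> positivity

section Universal

variable {V : Type} [Fintype V] {G : SimpleGraph V} {x y : V}

lemma deg_eq_card_sub_one (hx : G.IsUniversal x) : deg G x = Fintype.card V - 1 := by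
  change Nat.card (G.neighborSet x) = _
  rw [Nat.card_eq_fintype_card, card_neighborSet_eq_degree, (G.degree_eq_card_sub_one x).2 hx]

lemma lazyMeasure_of_isUniversal (hx : G.IsUniversal x) (p : ℝ) (z : V) :
    lazyMeasure G p x z = if z = x then p else (1 - p) / ((Fintype.card V : ℝ) - 1) := by
  rcases eq_or_ne z x with rfl | hz
  · simp [lazyMeasure]
  · rw [lazyMeasure, if_neg hz, if_neg hz, if_pos (hx hz.symm), deg_eq_card_sub_one hx,
      Nat.cast_pred (Fintype.card_pos_iff.2 ⟨x⟩)]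

theorem W1_lazyMeasure_of_isUniversal (hx : G.IsUniversal x) (hy : G.IsUniversal y) (hxy : x ≠ y)
    {p : ℝ} (hp0 : 0 ≤ p) (hp1 : p ≤ 1) :
    W1 G (lazyMeasure G p x) (lazyMeasure G p y)
      = |p * Fintype.card V - 1| / ((Fintype.card V : ℝ) - 1) := by
  have hn : (1 : ℝ) < Fintype.card V := by exact_mod_cast Fintype.one_lt_card_iff.2 ⟨x, y, hxy⟩
  have hG : G.Connected := .of_isUniversal hx
  have hμ := lazyMeasure_nonneg G hp0 hp1
  have hμx := lazyMeasure_of_isUniversal hx p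
  have hμy := lazyMeasure_of_isUniversal hy p
  set q := (1 - p) / ((Fintype.card V : ℝ) - 1) with hq
  have hW : W1 G (lazyMeasure G p x) (lazyMeasure G p y) = |p - q| := by
    rcases le_total q p with hqp | hpq
    · rw [abs_of_nonneg (sub_nonneg.2 hqp)]
      refine W1_eq_of_eq_add_of_adj hG (hx hxy) (hμ x) (hμ y) (sub_nonneg.2 hqp) ?_ ?_ ?_
      · simp [hμx, hμy, hxy]
      · simp [hμx, hμy, hxy.symm]
      · intro z hzx hzy; simp [hμx, hμy, hzx, hzy]
    · rw [abs_sub_comm, abs_of_nonneg (sub_nonneg.2 hpq)]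
      refine W1_eq_of_eq_add_of_adj hG (hy hxy.symm) (hμ x) (hμ y) (sub_nonneg.2 hpq) ?_ ?_ ?_
      · simp [hμx, hμy, hxy.symm]
      · simp [hμx, hμy, hxy]
      · intro z hzy hzx; simp [hμx, hμy, hzx, hzy]
  have hpq : p - q = (p * Fintype.card V - 1) / ((Fintype.card V : ℝ) - 1) := by
    rw [hq]
    field_simp [(sub_pos.2 hn).ne']
    ring
  rw [hW, hpq, abs_div, abs_of_pos (sub_pos.2 hn)]

theorem kappa_of_isUniversal (hx : G.IsUniversal x) (hy : G.IsUniversal y) (hxy : x ≠ y) :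
    (∀ p : ℝ, 0 ≤ p → p ≤ 1 / (Fintype.card V : ℝ) →
      kappa G p x y = ((Fintype.card V : ℝ) - 2) / ((Fintype.card V : ℝ) - 1)
        + ((Fintype.card V : ℝ) / ((Fintype.card V : ℝ) - 1)) * p) ∧
    (∀ p : ℝ, 1 / (Fintype.card V : ℝ) ≤ p → p ≤ 1 →
      kappa G p x y = ((Fintype.card V : ℝ) / ((Fintype.card V : ℝ) - 1)) * (1 - p)) := by
  have hW := fun p => W1_lazyMeasure_of_isUniversal (p := p) hx hy hxy
  have hn : (1 : ℝ) < Fintype.card V := by exact_mod_cast Fintype.one_lt_card_iff.2 ⟨x, y, hxy⟩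
  simp only [kappa]
  generalize (Fintype.card V : ℝ) = n at hW hn ⊢
  have hn1 : n - 1 ≠ 0 := (sub_pos.2 hn).ne'
  refine ⟨fun p hp0 hp => ?_, fun p hp hp1 => ?_⟩
  · have hpn : p * n ≤ 1 := (le_div_iff₀ (by linarith)).1 hp
    rw [hW p hp0 (by nlinarith), abs_of_nonpos (by linarith)]
    field_simp
    ring
  · have hpn : 1 ≤ p * n := (div_le_iff₀ (by linarith)).1 hp
    rw [hW p (le_trans (by positivity) hp) hp1, abs_of_nonneg (by linarith)]
    field_simp
    ring

end Universal

lemma antitree_three_isUniversal (a : ℕ → ℕ) {v : ATV 3 a} (hv : v.1.val = 1) :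
    (antitree 3 a).IsUniversal v := fun z hz => ⟨hz, by omega⟩

theorem spherical_inner_edge_kappa_general (a b c : ℕ)
    (x y : ATV 3 (fun i => if i = 0 then a else if i = 1 then b else c))
    (hx : x.1.val = 1) (hy : y.1.val = 1) (hxy : x ≠ y) :
    (∀ p : ℝ, 0 ≤ p → p ≤ 1 / ((a : ℝ) + b + c) →
      kappa (antitree 3 (fun i => if i = 0 then a else if i = 1 then b else c)) p x y
        = ((a : ℝ) + b + c - 2) / ((a : ℝ) + b + c - 1)
          + (((a : ℝ) + b + c) / ((a : ℝ) + b + c - 1)) * p) ∧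
    (∀ p : ℝ, 1 / ((a : ℝ) + b + c) ≤ p → p ≤ 1 →
      kappa (antitree 3 (fun i => if i = 0 then a else if i = 1 then b else c)) p x y
        = (((a : ℝ) + b + c) / ((a : ℝ) + b + c - 1)) * (1 - p)) := by
  have hcard : (Fintype.card (ATV 3 (fun i => if i = 0 then a else if i = 1 then b else c)) : ℝ)
      = a + b + c := by
    simp [Fin.sum_univ_three]
  simpa only [hcard] using kappa_of_isUniversal (antitree_three_isUniversal _ hx)
    (antitree_three_isUniversal _ hy) hxy

/-- For `1 ≤ a ≤ b ≤ c` and distinct vertices `x, y` of the second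
generation of `AT((a,b,c))`, the Ollivier-Ricci curvature is
`(a+b+c-2)/(a+b+c-1) + ((a+b+c)/(a+b+c-1))p` on `[0, 1/(a+b+c)]` and
`((a+b+c)/(a+b+c-1))(1-p)` on `[1/(a+b+c), 1]`. -/
theorem spherical_inner_edge_kappa (a b c : ℕ) (ha : 1 ≤ a) (hab : a ≤ b) (hbc : b ≤ c)
    (x y : ATV 3 (fun i => if i = 0 then a else if i = 1 then b else c))
    (hx : x.1.val = 1) (hy : y.1.val = 1) (hxy : x ≠ y) :
    (∀ p : ℝ, 0 ≤ p → p ≤ 1 / ((a : ℝ) + b + c) →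
      kappa (antitree 3 (fun i => if i = 0 then a else if i = 1 then b else c)) p x y
        = ((a : ℝ) + b + c - 2) / ((a : ℝ) + b + c - 1)
          + (((a : ℝ) + b + c) / ((a : ℝ) + b + c - 1)) * p) ∧
    (∀ p : ℝ, 1 / ((a : ℝ) + b + c) ≤ p → p ≤ 1 →
      kappa (antitree 3 (fun i => if i = 0 then a else if i = 1 then b else c)) p x y
        = (((a : ℝ) + b + c) / ((a : ℝ) + b + c - 1)) * (1 - p)) :=
  spherical_inner_edge_kappa_general a b c x y hx hy hxy
end
end

section
/- Let 1 ≤ b ≤ c, let x be the unique vertex of V_1 and y a vertex of V_2 in the antitree AT((1,b,c)). Then κ_0(x,y) = (b−1)/(b+c) and κ_{LLY}(x,y) = (b+1)/(b+c). -/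
noncomputable section
open Classical Filter Topology

/-! Relative to `y`, the vertices of `AT((1,b,c))` fall into four kinds: the root `x`, `y` itself,
the `b - 1` other vertices of `V_2`, and the `c` leaves. Distances and both lazy measures depend
only on the kinds, so `W₁(μ_x^p, μ_y^p)` is pinned down by a transport plan and a 1-Lipschitz
potential, both functions of the kinds, whose costs agree. At `p = 0` the potential is the
indicator of `V_2`; for `p ≥ 1/2` it is `2 - generation`, and then `κ_p = (1-p)(b+1)/(b+c)`. -/

theorem sum_sub_mul_eq_of_marginals {V : Type} [Fintype V] {μ ν : V → ℝ} (f : V → ℝ)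
    {π : V → V → ℝ} (hμ : ∀ u, ∑ v, π u v = μ u) (hν : ∀ v, ∑ u, π u v = ν v) :
    ∑ u, ∑ v, (f u - f v) * π u v = ∑ v, f v * μ v - ∑ v, f v * ν v := by
  simp_rw [sub_mul, Finset.sum_sub_distrib, ← hμ, ← hν, Finset.mul_sum]
  rw [Finset.sum_comm (f := fun u v => f v * π u v)]

theorem W1_eq_of_potential_of_plan {V : Type} [Fintype V] (G : SimpleGraph V) {μ ν : V → ℝ}
    (f : V → ℝ) (π : V → V → ℝ) (hf : ∀ u v, f u - f v ≤ G.dist u v)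
    (hπ : ∀ u v, 0 ≤ π u v) (hμ : ∀ u, ∑ v, π u v = μ u) (hν : ∀ v, ∑ u, π u v = ν v)
    (hπf : ∀ u v, π u v ≠ 0 → (G.dist u v : ℝ) ≤ f u - f v) :
    W1 G μ ν = ∑ v, f v * μ v - ∑ v, f v * ν v := by
  refine IsLeast.csInf_eq ⟨⟨π, hπ, hμ, hν, ?_⟩, ?_⟩
  · rw [← sum_sub_mul_eq_of_marginals f hμ hν]
    refine Finset.sum_congr rfl fun u _ => Finset.sum_congr rfl fun v _ => ?_
    by_cases h : π u v = 0
    · simp [h]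
    · rw [le_antisymm (hπf u v h) (hf u v)]
  · rintro t ⟨σ, hσ, hσμ, hσν, rfl⟩
    rw [← sum_sub_mul_eq_of_marginals f hσμ hσν]
    gcongr with u _ v _
    exacts [hσ u v, hf u v]

namespace AntitreeOneBC

abbrev genSizes (b c : ℕ) : ℕ → ℕ := fun i => if i = 0 then 1 else if i = 1 then b else c

abbrev Vert (b c : ℕ) := ATV 3 (genSizes b c)

abbrev graph (b c : ℕ) := antitree 3 (genSizes b c)

inductive Kind
  | root | base | sibling | leaf

namespace Kind

def gen : Kind → ℕ
  | root => 0
  | base | sibling => 1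
  | leaf => 2

def dist : Kind → Kind → ℕ
  | root, leaf | leaf, root => 2
  | _, _ => 1

def lazy (p d : ℝ) (k₀ k : Kind) : ℝ :=
  if k = k₀ then p else if k₀.dist k = 1 then (1 - p) / d else 0

end Kind

variable {b c : ℕ}

def kind (y v : Vert b c) : Kind :=
  if v = y then .base else if v.1.val = 0 then .root else if v.1.val = 1 then .sibling else .leaf

def kindSum (b c : ℕ) (g : Kind → ℝ) : ℝ :=
  g .root + g .base + ((b : ℝ) - 1) * g .sibling + c * g .leaf

theorem sum_comp_gen (h : ℕ → ℝ) : ∑ v : Vert b c, h v.1.val = h 0 + b * h 1 + c * h 2 := by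
  simp [Fintype.sum_sigma, Fin.sum_univ_three]

variable {x y : Vert b c}

theorem one_le_of_gen_eq_one (hy : y.1.val = 1) : 1 ≤ b := by
  obtain ⟨⟨i, hi⟩, j⟩ := y
  simp only at hy
  subst hy
  exact j.pos

theorem kind_eq_base_iff {v : Vert b c} : kind y v = .base ↔ v = y := by
  unfold kind; split_ifs <;> simp_all

theorem gen_kind (hy : y.1.val = 1) (v : Vert b c) : (kind y v).gen = v.1.val := by
  have := v.1.isLt
  unfold kind; split_ifs with h <;> simp [Kind.gen, h, hy] <;> omega

theorem eq_of_gen_eq_zero {u v : Vert b c} (hu : u.1.val = 0) (hv : v.1.val = 0) : u = v := by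
  obtain ⟨⟨i, hi⟩, j⟩ := u
  obtain ⟨⟨i', hi'⟩, j'⟩ := v
  simp only at hu hv
  subst hu hv
  rw [Fin.fin_one_eq_zero j, Fin.fin_one_eq_zero j']

theorem kind_eq_root_iff (hx : x.1.val = 0) (hy : y.1.val = 1) {v : Vert b c} :
    kind y v = .root ↔ v = x := by
  constructor
  · intro h
    unfold kind at h
    split_ifs at h with h₁ h₂
    exact eq_of_gen_eq_zero h₂ hx
  · rintro rfl
    have hxy : v ≠ y := fun h => by rw [h, hy] at hx; exact one_ne_zero hx
    simp [kind, hxy, hx]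

theorem sum_comp_kind (hy : y.1.val = 1) (g : Kind → ℝ) :
    ∑ v, g (kind y v) = kindSum b c g := by
  let h : ℕ → ℝ := fun n => if n = 0 then g .root else if n = 1 then g .sibling else g .leaf
  have hsplit : ∀ v, g (kind y v) = h v.1.val + if v = y then g .base - g .sibling else 0 := by
    intro v
    by_cases hv : v = y
    · simp [kind, hv, h, hy]
    · simp only [kind, hv, h, if_false, add_zero]
      split_ifs <;> rfl
  rw [Finset.sum_congr rfl fun v _ => hsplit v, Finset.sum_add_distrib, sum_comp_gen,
    Finset.sum_ite_eq']
  simp only [h, kindSum, Finset.mem_univ, if_true]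
  norm_num
  ring

theorem adj_iff (hy : y.1.val = 1) {u v : Vert b c} :
    (graph b c).Adj u v ↔ u ≠ v ∧ (kind y u).dist (kind y v) = 1 := by
  change u ≠ v ∧ _ ↔ _
  rw [← gen_kind hy u, ← gen_kind hy v]
  generalize kind y u = k
  generalize kind y v = k'
  cases k <;> cases k' <;> simp [Kind.gen, Kind.dist]

theorem adj_base_of_ne (hy : y.1.val = 1) {v : Vert b c} (hv : v ≠ y) : (graph b c).Adj v y := by
  rw [adj_iff hy, kind_eq_base_iff.mpr rfl]
  exact ⟨hv, by cases kind y v <;> rfl⟩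

theorem dist_eq_kind_dist (hy : y.1.val = 1) {u v : Vert b c} (huv : u ≠ v) :
    (graph b c).dist u v = (kind y u).dist (kind y v) := by
  have hcases : ∀ k k' : Kind, k.dist k' = 1 ∨ (k.dist k' = 2 ∧ k ≠ .base ∧ k' ≠ .base) := by
    rintro (_|_|_|_) (_|_|_|_) <;> simp [Kind.dist]
  rcases hcases (kind y u) (kind y v) with h | ⟨h, hu, hv⟩
  · rw [h, SimpleGraph.dist_eq_one_iff_adj, adj_iff hy]
    exact ⟨huv, h⟩
  · rw [Ne, kind_eq_base_iff] at hu hv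
    let walk :=
      (SimpleGraph.Walk.nil.cons (adj_base_of_ne hy hv).symm).cons (adj_base_of_ne hy hu)
    have hle : (graph b c).dist u v ≤ 2 := SimpleGraph.dist_le walk
    have hpos := walk.reachable.pos_dist_of_ne huv
    have hne : (graph b c).dist u v ≠ 1 := by
      rw [Ne, SimpleGraph.dist_eq_one_iff_adj, adj_iff hy, h]
      simp
    omega

theorem adj_iff_of_kind (hy : y.1.val = 1) {z : Vert b c}
    (hz : ∀ v, v = z ↔ kind y v = kind y z) (v : Vert b c) :
    (graph b c).Adj z v ↔ kind y v ≠ kind y z ∧ (kind y z).dist (kind y v) = 1 := by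
  rw [adj_iff hy, ne_comm, Ne, hz]

theorem deg_eq_kindSum (hy : y.1.val = 1) {z : Vert b c}
    (hz : ∀ v, v = z ↔ kind y v = kind y z) :
    (deg (graph b c) z : ℝ) =
      kindSum b c fun k => if k ≠ kind y z ∧ (kind y z).dist k = 1 then 1 else 0 := by
  rw [deg, Nat.card_eq_fintype_card, Fintype.card_subtype, Finset.natCast_card_filter,
    ← sum_comp_kind hy]
  simp only [adj_iff_of_kind hy hz]

theorem lazyMeasure_eq_comp_kind (hy : y.1.val = 1) {z : Vert b c}
    (hz : ∀ v, v = z ↔ kind y v = kind y z) (p : ℝ) :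
    lazyMeasure (graph b c) p z = Kind.lazy p (deg (graph b c) z) (kind y z) ∘ kind y := by
  funext v
  simp only [lazyMeasure, Kind.lazy, Function.comp, hz v, adj_iff_of_kind hy hz]
  split_ifs <;> simp_all

theorem eq_iff_kind_eq_root (hx : x.1.val = 0) (hy : y.1.val = 1) (v : Vert b c) :
    v = x ↔ kind y v = kind y x := by
  rw [(kind_eq_root_iff hx hy).mpr rfl, kind_eq_root_iff hx hy]

theorem eq_iff_kind_eq_base (v : Vert b c) : v = y ↔ kind y v = kind y y := by
  rw [kind_eq_base_iff.mpr rfl, kind_eq_base_iff]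

theorem lazyMeasure_root (hx : x.1.val = 0) (hy : y.1.val = 1) (p : ℝ) :
    lazyMeasure (graph b c) p x = Kind.lazy p b .root ∘ kind y := by
  have hz := eq_iff_kind_eq_root hx hy
  rw [lazyMeasure_eq_comp_kind hy hz, deg_eq_kindSum hy hz, (kind_eq_root_iff hx hy).mpr rfl]
  congr 2
  simp [kindSum, Kind.dist]

theorem lazyMeasure_base (hy : y.1.val = 1) (p : ℝ) :
    lazyMeasure (graph b c) p y = Kind.lazy p (b + c) .base ∘ kind y := by
  have hz := eq_iff_kind_eq_base (y := y)
  rw [lazyMeasure_eq_comp_kind hy hz, deg_eq_kindSum hy hz, kind_eq_base_iff.mpr rfl]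
  congr 2
  simp [kindSum, Kind.dist]

-- A vertex of kind `k` keeps mass `d k` and sends `r k k'` to each vertex of kind `k'`.
theorem W1_comp_kind (hy : y.1.val = 1) {m n : Kind → ℝ} (φ d : Kind → ℝ)
    (r : Kind → Kind → ℝ)
    (hφ : ∀ k k', φ k - φ k' ≤ k.dist k')
    (hd : ∀ k, 0 ≤ d k) (hr : ∀ k k', 0 ≤ r k k')
    (hm : ∀ k, d k + kindSum b c (r k) = m k)
    (hn : ∀ k', d k' + kindSum b c (fun k => r k k') = n k')
    (hrφ : ∀ k k', r k k' ≠ 0 → (k.dist k' : ℝ) ≤ φ k - φ k') :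
    W1 (graph b c) (m ∘ kind y) (n ∘ kind y) = kindSum b c (φ * m) - kindSum b c (φ * n) := by
  rw [← sum_comp_kind hy, ← sum_comp_kind hy]
  refine W1_eq_of_potential_of_plan _ (φ ∘ kind y)
    (fun u v => (if u = v then d (kind y u) else 0) + r (kind y u) (kind y v)) ?_ ?_ ?_ ?_ ?_
  · intro u v
    by_cases huv : u = v
    · simp [huv]
    · rw [dist_eq_kind_dist hy huv]
      exact hφ _ _
  · intro u v
    have := hd (kind y u)
    have := hr (kind y u) (kind y v)
    split_ifs <;> positivity
  · intro u
    simp [Finset.sum_add_distrib, sum_comp_kind hy, hm]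
  · intro v
    simp [Finset.sum_add_distrib, sum_comp_kind hy (fun k => r k (kind y v)), hn]
  · intro u v hπ
    by_cases huv : u = v
    · simp [huv]
    · rw [dist_eq_kind_dist hy huv]
      simp only [huv, if_false, zero_add] at hπ
      exact hrφ _ _ hπ

theorem kappa_zero (hx : x.1.val = 0) (hy : y.1.val = 1) :
    kappa (graph b c) 0 x y = ((b : ℝ) - 1) / (b + c) := by
  have hb : (1 : ℝ) ≤ b := by exact_mod_cast one_le_of_gen_eq_one hy
  have hbc : (0 : ℝ) < b + c := by positivity
  rw [kappa, lazyMeasure_root hx hy, lazyMeasure_base hy,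
    W1_comp_kind hy (fun | .base | .sibling => 1 | _ => 0)
      (fun | .sibling => 1 / (b + c) | _ => 0)
      (fun | .base, .root => 1 / (b + c) | .base, .leaf | .sibling, .leaf => 1 / (b * (b + c))
           | _, _ => 0)]
  · simp [kindSum, Kind.lazy, Kind.dist]
    field_simp
    ring
  · rintro (_|_|_|_) (_|_|_|_) <;> norm_num [Kind.dist]
  · rintro (_|_|_|_) <;> positivity
  · rintro (_|_|_|_) (_|_|_|_) <;> positivity
  · rintro (_|_|_|_) <;> simp [kindSum, Kind.lazy, Kind.dist] <;> field_simp
  · rintro (_|_|_|_) <;> simp [kindSum, Kind.lazy, Kind.dist]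
    field_simp
    ring
  · rintro (_|_|_|_) (_|_|_|_) <;> norm_num [Kind.dist]

theorem kappa_lazy (hx : x.1.val = 0) (hy : y.1.val = 1) {p : ℝ} (hp : 1 / 2 ≤ p)
    (hp' : p ≤ 1) :
    kappa (graph b c) p x y = (1 - p) * (b + 1) / (b + c) := by
  have hb : (1 : ℝ) ≤ b := by exact_mod_cast one_le_of_gen_eq_one hy
  have hbc : (0 : ℝ) < b + c := by positivity
  have hq : 0 ≤ 1 - p := by linarith
  have hpb : 0 ≤ p - (1 - p) / b := by linarith [div_le_self hq hb]
  rw [kappa, lazyMeasure_root hx hy, lazyMeasure_base hy,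
    W1_comp_kind hy (fun | .root => 2 | .base | .sibling => 1 | .leaf => 0)
      (fun | .root | .sibling => (1 - p) / (b + c) | .base => (1 - p) / b | .leaf => 0)
      (fun | .root, .base => p - (1 - p) / b
           | .root, .leaf | .sibling, .leaf => (1 - p) / (b * (b + c))
           | _, _ => 0)]
  · simp [kindSum, Kind.lazy, Kind.dist]
    field_simp
    ring
  · rintro (_|_|_|_) (_|_|_|_) <;> norm_num [Kind.dist]
  · rintro (_|_|_|_) <;> positivity
  · rintro (_|_|_|_) (_|_|_|_) <;> positivity
  · rintro (_|_|_|_) <;> simp [kindSum, Kind.lazy, Kind.dist] <;> field_simp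
    ring
  · rintro (_|_|_|_) <;> simp [kindSum, Kind.lazy, Kind.dist]
    field_simp
    ring
  · rintro (_|_|_|_) (_|_|_|_) <;> norm_num [Kind.dist]

end AntitreeOneBC

theorem radial_root_edge_kappa_general (b c : ℕ)
    (x y : ATV 3 (fun i => if i = 0 then 1 else if i = 1 then b else c))
    (hx : x.1.val = 0) (hy : y.1.val = 1) :
    kappa (antitree 3 (fun i => if i = 0 then 1 else if i = 1 then b else c)) 0 x y
      = ((b : ℝ) - 1) / ((b : ℝ) + c) ∧
    Tendsto (fun p : ℝ =>
        kappa (antitree 3 (fun i => if i = 0 then 1 else if i = 1 then b else c)) p x y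
          / (1 - p)) (𝓝[<] 1) (𝓝 (((b : ℝ) + 1) / ((b : ℝ) + c))) := by
  refine ⟨AntitreeOneBC.kappa_zero hx hy, tendsto_const_nhds.congr' ?_⟩
  filter_upwards [Ioo_mem_nhdsLT (show (1 / 2 : ℝ) < 1 by norm_num)] with p hp
  rw [AntitreeOneBC.kappa_lazy hx hy hp.1.le hp.2.le, mul_div_assoc,
    mul_div_cancel_left₀ _ (sub_ne_zero.mpr hp.2.ne')]

/-- For `1 ≤ b ≤ c`, `x` the unique root vertex and `y ∈ V_2` of the
antitree `AT((1,b,c))`, we have `κ_0(x,y) = (b-1)/(b+c)` and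
`κ_{LLY}(x,y) = lim_{p→1} κ_p(x,y)/(1-p) = (b+1)/(b+c)`. -/
theorem radial_root_edge_kappa (b c : ℕ) (hb : 1 ≤ b) (hbc : b ≤ c)
    (x y : ATV 3 (fun i => if i = 0 then 1 else if i = 1 then b else c))
    (hx : x.1.val = 0) (hy : y.1.val = 1) :
    kappa (antitree 3 (fun i => if i = 0 then 1 else if i = 1 then b else c)) 0 x y
      = ((b : ℝ) - 1) / ((b : ℝ) + c) ∧
    Tendsto (fun p : ℝ =>
        kappa (antitree 3 (fun i => if i = 0 then 1 else if i = 1 then b else c)) p x y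
          / (1 - p)) (𝓝[<] 1) (𝓝 (((b : ℝ) + 1) / ((b : ℝ) + c))) :=
  radial_root_edge_kappa_general b c x y hx hy
end
end
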